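/- For all t > 0 and x ∈ ℝ, the identity ∫₀ᵗ (√(t−s)/(π s^{3/2})) |x| e^{−x²/(2s)} ds = ∫₀ᵗ (1/√(2π s)) e^{−x²/(2s)} ds holds. -/

import Mathlib

open MeasureTheory Real Set
open scoped ENNReal

/-!
With `a = |x|`, the left integrand is `∫ₛᵗ K(s, r) dr` for the kernel
`K(s, r) = f_a(s) · p_{r-s}(0)`, where `f_a(s) = a e^{-a²/2s} / √(2π s³)` is the density of the
first passage time of Brownian motion to level `a` and `p_u(y) = e^{-y²/2u} / √(2π u)` is the
heat kernel. Exchanging the order of integration over the triangle `0 < s < r < t`, it remains to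
see `∫₀ʳ K(s, r) ds = p_r(a)`, the first-passage decomposition of the heat kernel. The
substitution `1/s = 1/r + w` turns this into the Gamma integral `∫₀^∞ w^{-1/2} e^{-a²w/2} dw`.
-/

theorem lintegral_Ioo_lintegral_Ioo_swap {μ : Measure ℝ} [SFinite μ] {f : ℝ → ℝ → ℝ≥0∞}
    (hf : Measurable (Function.uncurry f)) (a b : ℝ) :
    ∫⁻ s in Ioo a b, ∫⁻ r in Ioo s b, f s r ∂μ ∂μ
      = ∫⁻ r in Ioo a b, ∫⁻ s in Ioo a r, f s r ∂μ ∂μ := by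
  set F : ℝ → ℝ → ℝ≥0∞ := fun s r => if s < r then f s r else 0
  have hF : Measurable (Function.uncurry F) :=
    Measurable.ite (measurableSet_lt measurable_fst measurable_snd) hf measurable_const
  have hrow : ∀ s ∈ Ioo a b, ∫⁻ r in Ioo s b, f s r ∂μ = ∫⁻ r in Ioo a b, F s r ∂μ := by
    intro s hs
    have hset : Ioi s ∩ Ioo a b = Ioo s b := by
      ext r; simp only [mem_inter_iff, mem_Ioi, mem_Ioo]; grind
    rw [← hset, ← Measure.restrict_restrict measurableSet_Ioi,
      ← lintegral_indicator measurableSet_Ioi]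
    simp [F, indicator_apply]
  have hcol : ∀ r ∈ Ioo a b, ∫⁻ s in Ioo a r, f s r ∂μ = ∫⁻ s in Ioo a b, F s r ∂μ := by
    intro r hr
    have hset : Iio r ∩ Ioo a b = Ioo a r := by
      ext s; simp only [mem_inter_iff, mem_Iio, mem_Ioo]; grind
    rw [← hset, ← Measure.restrict_restrict measurableSet_Iio,
      ← lintegral_indicator measurableSet_Iio]
    simp [F, indicator_apply]
  rw [setLIntegral_congr_fun measurableSet_Ioo hrow, setLIntegral_congr_fun measurableSet_Ioo hcol]
  exact lintegral_lintegral_swap hF.aemeasurable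

theorem lintegral_Ioo_ofReal_inv_sqrt_sub {s t : ℝ} (hst : s ≤ t) :
    ∫⁻ r in Ioo s t, ENNReal.ofReal (1 / √(r - s)) = ENNReal.ofReal (2 * √(t - s)) := by
  have hint : IntervalIntegrable (fun r => (r - s) ^ (-(1:ℝ)/2)) volume s t := by
    simpa using (intervalIntegral.intervalIntegrable_rpow' (r := -(1:ℝ)/2) (a := s - s) (b := t - s)
      (by norm_num)).comp_sub_right s
  have hval : ∫ r in s..t, (r - s) ^ (-(1:ℝ)/2) = 2 * √(t - s) := by
    rw [intervalIntegral.integral_comp_sub_right (fun y : ℝ => y ^ (-(1:ℝ)/2)), sub_self,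
      integral_rpow (Or.inl (by norm_num)), sqrt_eq_rpow]
    norm_num
    ring
  have hpt : ∀ r ∈ Ioo s t, 1 / √(r - s) = (r - s) ^ (-(1:ℝ)/2) := by
    intro r hr
    rw [neg_div, rpow_neg (sub_pos.2 hr.1).le, sqrt_eq_rpow, one_div]
  rw [setLIntegral_congr_fun measurableSet_Ioo fun r hr => congrArg ENNReal.ofReal (hpt r hr),
    ← ofReal_integral_eq_lintegral_ofReal, ← integral_Ioc_eq_integral_Ioo,
    ← intervalIntegral.integral_of_le hst, hval]
  · exact (intervalIntegrable_iff_integrableOn_Ioo_of_le hst).mp hint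
  · filter_upwards [ae_restrict_mem measurableSet_Ioo] with r hr
    exact rpow_nonneg (sub_pos.2 hr.1).le _

theorem lintegral_Ioi_ofReal_rpow_mul_exp_neg_mul {p c : ℝ} (hp : 0 < p) (hc : 0 < c) :
    ∫⁻ w in Ioi 0, ENNReal.ofReal (w ^ (p - 1) * exp (-(c * w)))
      = ENNReal.ofReal ((1 / c) ^ p * Gamma p) := by
  have h := integral_rpow_mul_exp_neg_mul_Ioi hp hc
  have hint : IntegrableOn (fun w : ℝ => w ^ (p - 1) * exp (-(c * w))) (Ioi 0) :=
    Integrable.of_integral_ne_zero (by rw [h]; positivity)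
  rw [← h, ofReal_integral_eq_lintegral_ofReal hint]
  filter_upwards [ae_restrict_mem measurableSet_Ioi] with w hw
  exact mul_nonneg (rpow_nonneg (le_of_lt hw) _) (exp_pos _).le

theorem lintegral_Ioo_zero_eq_lintegral_Ioi_inv_add_inv {r : ℝ} (hr : 0 < r) (g : ℝ → ℝ≥0∞) :
    ∫⁻ s in Ioo 0 r, g s = ∫⁻ w in Ioi 0, ENNReal.ofReal (((w + r⁻¹)⁻¹) ^ 2) * g (w + r⁻¹)⁻¹ := by
  have himg : (fun w => (w + r⁻¹)⁻¹) '' Ioi 0 = Ioo 0 r := by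
    ext s
    simp only [mem_image, mem_Ioi, mem_Ioo]
    constructor
    · rintro ⟨w, hw, rfl⟩
      exact ⟨by positivity, (inv_lt_comm₀ (by positivity) hr).2 (by simpa using hw)⟩
    · rintro ⟨hs0, hsr⟩
      refine ⟨s⁻¹ - r⁻¹, sub_pos.2 ((inv_lt_inv₀ hr hs0).2 hsr), by simp⟩
  have hder : ∀ w ∈ Ioi (0:ℝ),
      HasDerivWithinAt (fun w => (w + r⁻¹)⁻¹) (-((w + r⁻¹) ^ 2)⁻¹) (Ioi 0) w := by
    intro w hw
    have : w + r⁻¹ ≠ 0 := by have : (0:ℝ) < w := hw; positivity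
    exact (((hasDerivAt_inv this).comp w ((hasDerivAt_id' w).add_const r⁻¹)).congr_deriv
      (mul_one _)).hasDerivWithinAt
  have hinj : InjOn (fun w => (w + r⁻¹)⁻¹) (Ioi 0) := by
    intro u _ v _ h
    simpa using h
  rw [← himg, lintegral_image_eq_lintegral_abs_deriv_mul measurableSet_Ioi hder hinj]
  refine setLIntegral_congr_fun measurableSet_Ioi fun w hw => ?_
  simp [inv_pow]

/-- `K(s, r)` of the module docstring. -/
noncomputable def hittingKernel (a s r : ℝ) : ℝ :=
  a * exp (-a ^ 2 / (2 * s)) / (2 * π * s ^ ((3:ℝ)/2) * √(r - s))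

theorem lintegral_Ioo_hittingKernel_right {a s t : ℝ} (ha : 0 ≤ a) (hs : 0 < s) (hst : s ≤ t) :
    ∫⁻ r in Ioo s t, ENNReal.ofReal (hittingKernel a s r)
      = ENNReal.ofReal (√(t - s) / (π * s ^ ((3:ℝ)/2)) * a * exp (-a ^ 2 / (2 * s))) := by
  set c := a * exp (-a ^ 2 / (2 * s)) / (2 * π * s ^ ((3:ℝ)/2))
  have hc : 0 ≤ c := by positivity
  have hK : ∀ r, hittingKernel a s r = c * (1 / √(r - s)) := fun r => by
    rw [hittingKernel]; ring
  simp_rw [hK, ENNReal.ofReal_mul hc]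
  rw [lintegral_const_mul _ (by fun_prop), lintegral_Ioo_ofReal_inv_sqrt_sub hst,
    ← ENNReal.ofReal_mul hc]
  congr 1
  ring

theorem rpow_three_halves_eq_mul_sqrt {s : ℝ} (hs : 0 ≤ s) : s ^ ((3:ℝ)/2) = s * √s := by
  rw [sqrt_eq_rpow, show (3:ℝ)/2 = 1 + 1/2 by norm_num, rpow_add' hs (by norm_num), rpow_one]

theorem sq_mul_hittingKernel_inv_add_inv {a r w : ℝ} (hr : 0 < r) (hw : 0 < w) :
    ((w + r⁻¹)⁻¹) ^ 2 * hittingKernel a (w + r⁻¹)⁻¹ r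
      = a * exp (-a ^ 2 / (2 * r)) / (2 * π * √r)
          * (w ^ ((1:ℝ)/2 - 1) * exp (-(a ^ 2 / 2 * w))) := by
  set s := (w + r⁻¹)⁻¹ with hs_def
  have hs : 0 < s := by positivity
  have hw_eq : w = s⁻¹ - r⁻¹ := by rw [hs_def, inv_inv]; ring
  have hsub : s * (r - s) = s ^ 2 * (r * w) := by rw [hw_eq]; field_simp
  have hroot : s ^ ((3:ℝ)/2) * √(r - s) = s ^ 2 * √r * √w := by
    rw [rpow_three_halves_eq_mul_sqrt hs.le, mul_assoc, ← sqrt_mul hs.le, hsub,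
      sqrt_mul (by positivity), sqrt_mul hr.le, sqrt_sq hs.le]
    ring
  have hexp : -a ^ 2 / (2 * s) = -a ^ 2 / (2 * r) + -(a ^ 2 / 2 * w) := by
    rw [hw_eq]; field_simp; ring
  have hpow : w ^ ((1:ℝ)/2 - 1) = (√w)⁻¹ := by
    rw [show (1:ℝ)/2 - 1 = -(1/2) by norm_num, rpow_neg hw.le, sqrt_eq_rpow]
  rw [hittingKernel, mul_assoc (2 * π), hroot, hexp, exp_add, hpow]
  have : 0 < √w := sqrt_pos.2 hw
  have : 0 < √r := sqrt_pos.2 hr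
  field_simp

theorem lintegral_Ioo_hittingKernel_left {a r : ℝ} (ha : 0 < a) (hr : 0 < r) :
    ∫⁻ s in Ioo 0 r, ENNReal.ofReal (hittingKernel a s r)
      = ENNReal.ofReal (1 / √(2 * π * r) * exp (-a ^ 2 / (2 * r))) := by
  set C := a * exp (-a ^ 2 / (2 * r)) / (2 * π * √r)
  have hC : 0 ≤ C := by positivity
  rw [lintegral_Ioo_zero_eq_lintegral_Ioi_inv_add_inv hr]
  have hpt : ∀ w ∈ Ioi (0:ℝ), ENNReal.ofReal (((w + r⁻¹)⁻¹) ^ 2)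
        * ENNReal.ofReal (hittingKernel a (w + r⁻¹)⁻¹ r)
      = ENNReal.ofReal C * ENNReal.ofReal (w ^ ((1:ℝ)/2 - 1) * exp (-(a ^ 2 / 2 * w))) := by
    intro w hw
    rw [← ENNReal.ofReal_mul (by positivity), sq_mul_hittingKernel_inv_add_inv hr hw,
      ENNReal.ofReal_mul hC]
  rw [setLIntegral_congr_fun measurableSet_Ioi hpt, lintegral_const_mul _ (by fun_prop),
    lintegral_Ioi_ofReal_rpow_mul_exp_neg_mul one_half_pos (by positivity), ← ENNReal.ofReal_mul hC,
    Gamma_one_half_eq]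
  congr 1
  have hsqrt : √(1 / (a ^ 2 / 2)) = √2 / a := by
    rw [show 1 / (a ^ 2 / 2) = (√2 / a) ^ 2 by rw [div_pow, sq_sqrt zero_le_two]; field_simp,
      sqrt_sq (by positivity)]
  rw [← sqrt_eq_rpow, hsqrt, sqrt_mul (by positivity), sqrt_mul (by positivity)]
  have hπ : √π ^ 2 = π := sq_sqrt pi_pos.le
  have h2 : √2 ^ 2 = 2 := sq_sqrt zero_le_two
  have : 0 < √π := sqrt_pos.2 pi_pos
  have : 0 < √r := sqrt_pos.2 hr
  simp only [C]
  field_simp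
  rw [h2, hπ]

theorem integral_identity (t x : ℝ) (hx : x ≠ 0) :
    ∫ s in Set.Ioc (0:ℝ) t,
        Real.sqrt (t - s) / (Real.pi * s ^ ((3:ℝ)/2)) * |x| * Real.exp (-x ^ 2 / (2 * s))
      = ∫ s in Set.Ioc (0:ℝ) t,
        (1 / Real.sqrt (2 * Real.pi * s)) * Real.exp (-x ^ 2 / (2 * s)) := by
  have ha : 0 < |x| := abs_pos.mpr hx
  rw [← sq_abs x, integral_eq_lintegral_of_nonneg_ae _ (by fun_prop),
    integral_eq_lintegral_of_nonneg_ae _ (by fun_prop),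
    Measure.restrict_congr_set Ioo_ae_eq_Ioc.symm]
  · congr 1
    calc ∫⁻ s in Ioo 0 t, ENNReal.ofReal
            (√(t - s) / (π * s ^ ((3:ℝ)/2)) * |x| * exp (-|x| ^ 2 / (2 * s)))
        = ∫⁻ s in Ioo 0 t, ∫⁻ r in Ioo s t, ENNReal.ofReal (hittingKernel |x| s r) :=
          setLIntegral_congr_fun measurableSet_Ioo fun s hs =>
            (lintegral_Ioo_hittingKernel_right ha.le hs.1 hs.2.le).symm
      _ = ∫⁻ r in Ioo 0 t, ∫⁻ s in Ioo 0 r, ENNReal.ofReal (hittingKernel |x| s r) :=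
          lintegral_Ioo_lintegral_Ioo_swap (by unfold hittingKernel; fun_prop) 0 t
      _ = ∫⁻ r in Ioo 0 t, ENNReal.ofReal (1 / √(2 * π * r) * exp (-|x| ^ 2 / (2 * r))) :=
          setLIntegral_congr_fun measurableSet_Ioo fun r hr =>
            lintegral_Ioo_hittingKernel_left ha hr.1
  · exact Filter.Eventually.of_forall fun s => by positivity
  · filter_upwards [ae_restrict_mem measurableSet_Ioc] with s hs
    have : 0 < s := hs.1
    positivity
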